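/- arXiv:2508.02830 — 4 statements merged into one kernel-verified Lean document; each statement's English description precedes it below -/
import Mathlib

section
/- Let S be an invertible n×n complex matrix. For any index i, the row r_i of S belongs to the spectracone C(S) (i.e., S D_{r_i} S⁻¹ is entrywise nonnegative) if and only if for every j, the Hadamard product r_i ∘ r_j belongs to the conical hull of the rows of S. -/
open scoped ComplexOrder

def coniRows {n : ℕ} (S : Matrix (Fin n) (Fin n) ℂ) (x : Fin n → ℂ) : Prop :=
  ∃ α : Fin n → ℝ, (∀ k, 0 ≤ α k) ∧ x = ∑ k, α k • S k

theorem stmt1 {n : ℕ} (S : Matrix (Fin n) (Fin n) ℂ) (hS : IsUnit S) (i : Fin n) :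
    (∀ a b, 0 ≤ (S * Matrix.diagonal (S i) * S⁻¹) a b) ↔
      ∀ j, coniRows S (S i * S j) := by
  have hdet : IsUnit S.det := (Matrix.isUnit_iff_isUnit_det S).mp hS
  set M := S * Matrix.diagonal (S i) * S⁻¹ with hM
  have hMS : M * S = S * Matrix.diagonal (S i) := by
    rw [hM, Matrix.mul_assoc, Matrix.nonsing_inv_mul S hdet, Matrix.mul_one]
  have hrow : ∀ a b, ∑ k, M a k * S k b = S i b * S a b := by
    intro a b
    have h := congrFun (congrFun hMS a) b
    rw [Matrix.mul_diagonal] at h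
    simpa [Matrix.mul_apply, mul_comm] using h
  constructor
  · intro h j
    refine ⟨fun k => (M j k).re, fun k => (Complex.le_def.mp (h j k)).1, ?_⟩
    have hre : ∀ k, ((M j k).re : ℂ) = M j k := by
      intro k
      have := (Complex.le_def.mp (h j k)).2
      apply Complex.ext <;> simp [← this]
    funext b
    simp only [Finset.sum_apply, Pi.smul_apply, Complex.real_smul, hre,
      Pi.mul_apply]
    rw [hrow j b]
  · intro h a b
    obtain ⟨α, hα, heq⟩ := h a
    have hv : Matrix.vecMul (M a) S = Matrix.vecMul (fun k => (α k : ℂ)) S := by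
      funext b'
      have h1 : Matrix.vecMul (M a) S b' = ∑ k, M a k * S k b' := by
        simp [Matrix.vecMul, dotProduct]
      have h2 : Matrix.vecMul (fun k => (α k : ℂ)) S b' = ∑ k, (α k : ℂ) * S k b' := by
        simp [Matrix.vecMul, dotProduct]
      rw [h1, h2, hrow a b']
      have := congrFun heq b'
      simpa [Finset.sum_apply, Pi.smul_apply, Complex.real_smul] using this
    have hc : M a = fun k => (α k : ℂ) := by
      have := congrArg (fun v => Matrix.vecMul v S⁻¹) hv
      simpa [Matrix.vecMul_vecMul, Matrix.mul_nonsing_inv S hdet] using this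
    have : M a b = ((α b : ℝ) : ℂ) := congrFun hc b
    rw [this]
    exact_mod_cast hα b
end

section
/- An invertible n×n complex matrix S satisfies C(S) = C_r(S) if and only if the all-ones vector e lies in C_r(S) and S is row Hadamard conic, i.e., r_i ∘ r_j ∈ C_r(S) for all i,j. -/
open scoped ComplexOrder

/-!
Row `a` of `S D_x S⁻¹` is the coordinate vector of `rₐ ∘ x` in the basis of rows of `S`, so
`x ∈ C(S)` iff `rₐ ∘ x ∈ C_r(S)` for every row `rₐ`. Hence every row lies in `C(S)`, and
`C(S) = C_r(S)` forces `e` and all `rᵢ ∘ rⱼ` into `C_r(S)`. Conversely, writing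
`e = ∑ αₐ rₐ` gives `x = ∑ αₐ (rₐ ∘ x) ∈ C_r(S)` for `x ∈ C(S)`, and for `x = ∑ βₖ rₖ ∈ C_r(S)`
each `rₐ ∘ x = ∑ βₖ (rₐ ∘ rₖ)` lies in `C_r(S)` when `S` is row Hadamard conic.
-/

open Matrix

section ConiRows

variable {n : ℕ} (S : Matrix (Fin n) (Fin n) ℂ)

lemma sum_real_smul_row_eq_vecMul (α : Fin n → ℝ) :
    ∑ k, α k • S k = (fun k => (α k : ℂ)) ᵥ* S := by
  funext j
  simp [vecMul, dotProduct, Complex.real_smul]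

lemma coniRows_row (a : Fin n) : coniRows S (S a) := by
  refine ⟨Pi.single a 1, fun k => ?_, ?_⟩
  · by_cases hk : k = a <;> simp [hk]
  · simp only [Pi.single_apply, ite_smul, one_smul, zero_smul]
    exact (Fintype.sum_ite_eq' a S).symm

lemma coniRows_sum {ι : Type*} [Fintype ι] (f : ι → Fin n → ℂ) (α : ι → ℝ)
    (hα : ∀ i, 0 ≤ α i) (hf : ∀ i, coniRows S (f i)) :
    coniRows S (∑ i, α i • f i) := by
  choose β hβ hfβ using hf
  refine ⟨fun k => ∑ i, α i * β i k,
    fun k => Finset.sum_nonneg fun i _ => mul_nonneg (hα i) (hβ i k), ?_⟩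
  simp_rw [hfβ, Finset.smul_sum, smul_smul, Finset.sum_smul]
  exact Finset.sum_comm

lemma coniRows.mul {x y : Fin n → ℂ} (hy : coniRows S y) (hx : ∀ k, coniRows S (S k * x)) :
    coniRows S (y * x) := by
  obtain ⟨α, hα, rfl⟩ := hy
  simp_rw [Finset.sum_mul, smul_mul_assoc]
  exact coniRows_sum S _ α hα hx

variable {S}

-- For invertible `S` the only coordinates of `w` in the row basis are `w S⁻¹`.
lemma coniRows_iff_nonneg_vecMul_inv (hS : IsUnit S) (w : Fin n → ℂ) :
    coniRows S w ↔ ∀ b, 0 ≤ (w ᵥ* S⁻¹) b := by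
  have hdet : IsUnit S.det := (isUnit_iff_isUnit_det S).mp hS
  constructor
  · rintro ⟨α, hα, rfl⟩ b
    rw [sum_real_smul_row_eq_vecMul, vecMul_vecMul, mul_nonsing_inv S hdet, vecMul_one]
    exact Complex.zero_le_real.mpr (hα b)
  · intro h
    choose α hα hαw using fun b => RCLike.nonneg_iff_exists_ofReal.mp (h b)
    refine ⟨α, hα, ?_⟩
    have hcoord : (fun k => (α k : ℂ)) = w ᵥ* S⁻¹ := funext hαw
    rw [sum_real_smul_row_eq_vecMul, hcoord, vecMul_vecMul, nonsing_inv_mul S hdet,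
      vecMul_one]

lemma nonneg_conj_diagonal_iff (hS : IsUnit S) (x : Fin n → ℂ) :
    (∀ a b, 0 ≤ (S * diagonal x * S⁻¹) a b) ↔ ∀ a, coniRows S (S a * x) := by
  have hrow : ∀ a, (S * diagonal x * S⁻¹) a = (S a * x) ᵥ* S⁻¹ := fun a => by
    rw [mul_apply_eq_vecMul, mul_apply_eq_vecMul]
    congr 1
    funext j
    simp [vecMul_diagonal]
  simp_rw [coniRows_iff_nonneg_vecMul_inv hS, hrow]

end ConiRows

theorem stmt2 {n : ℕ} (S : Matrix (Fin n) (Fin n) ℂ) (hS : IsUnit S) :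
    {x : Fin n → ℂ | ∀ a b, 0 ≤ (S * Matrix.diagonal x * S⁻¹) a b} =
        {x : Fin n → ℂ | coniRows S x} ↔
      (coniRows S (fun _ => 1) ∧ ∀ i j, coniRows S (S i * S j)) := by
  simp_rw [Set.ext_iff, Set.mem_ofPred_eq, nonneg_conj_diagonal_iff hS]
  constructor
  · intro h
    refine ⟨(h _).mp fun a => ?_, fun i j => (h (S j)).mpr (coniRows_row S j) i⟩
    simpa [Pi.mul_def] using coniRows_row S a
  · rintro ⟨hone, hmul⟩ x
    constructor
    · intro hx
      simpa [Pi.mul_def] using coniRows.mul S hone hx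
    · intro hx a
      rw [mul_comm]
      exact coniRows.mul S hx fun k => mul_comm (S k) (S a) ▸ hmul a k
end

section
/- Let Q be the character table of a finite group G with g_1 = identity. Then the matrix Q D_{e_1} Q⁻¹ is entrywise strictly positive; specifically, its (i,j)-entry equals dim(ρ_i)·dim(ρ_j)/|G|. In particular, Q is a Perron similarity. -/
open scoped ComplexOrder
open CategoryTheory

/-- The character table of a finite group: rows indexed by (irreducible) representations,
columns by conjugacy-class representatives. -/
noncomputable def charTable {G : Type} [Group G] {n : ℕ}
    (ρ : Fin n → FDRep ℂ G) (g : Fin n → G) : Matrix (Fin n) (Fin n) ℂ :=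
  Matrix.of fun i j => (ρ i).character (g j)

/-- Irreducibility of a square matrix (no nontrivial invariant coordinate subset). -/
def MatrixIrred {n : ℕ} (A : Matrix (Fin n) (Fin n) ℂ) : Prop :=
  ∀ s : Set (Fin n), s.Nonempty → s ≠ Set.univ → ∃ i ∈ s, ∃ j, j ∉ s ∧ A i j ≠ 0

/-!
Row orthogonality of irreducible characters says that `Q` times the matrix
`B j k = #(class of g_j) / |G| * χ_k (g_j⁻¹)` is the identity, so `Q⁻¹ = B`. Since `D_{e_1}` has
rank one, `(Q D_{e_1} Q⁻¹) i j = Q i 1 * B 1 j = χ_i(1) χ_j(1) / |G|`, which is positive because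
irreducible representations are nonzero. A matrix with no zero entry is irreducible, so `D_{e_1}`
witnesses that `Q` is a Perron similarity.
-/

open Finset

theorem IsConj.inv {G : Type*} [Group G] {a b : G} (h : IsConj a b) : IsConj a⁻¹ b⁻¹ := by
  obtain ⟨c, rfl⟩ := isConj_iff.mp h
  exact isConj_iff.mpr ⟨c, by group⟩

theorem FDRep.char_eq_of_isConj {k G : Type*} [Field k] [Group G] (V : FDRep k G) {a b : G}
    (h : IsConj a b) : V.character a = V.character b := by
  obtain ⟨c, rfl⟩ := isConj_iff.mp h
  exact (V.char_conj a c).symm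

theorem FDRep.finrank_pos_of_simple {k G : Type} [Field k] [IsAlgClosed k] [CharZero k] [Group G]
    [Fintype G] (V : FDRep k G) [Simple V] : 0 < Module.finrank k V := by
  by_contra! h0
  have : Subsingleton V := Module.finrank_zero_iff.mp (Nat.le_zero.mp h0)
  have hχ : ∀ h : G, V.character h = 0 := fun h => by
    simp [FDRep.character, Subsingleton.elim (V.ρ h) 0]
  let : Invertible (Nat.card G : k) := invertibleOfNonzero (by simp)
  have := FDRep.char_orthonormal V V
  simp [hχ] at this

theorem Matrix.mul_diagonal_single_one_mul_apply {ι α : Type*} [Fintype ι] [DecidableEq ι]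
    [NonAssocSemiring α] (A B : Matrix ι ι α) (k i j : ι) :
    (A * Matrix.diagonal (Pi.single k (1 : α)) * B) i j = A i k * B k j := by
  rw [Matrix.diagonal_single, Matrix.mul_apply, Finset.sum_eq_single k]
  · simp
  · intro l _ hl
    rw [Matrix.mul_single_apply_of_ne _ k k i l hl, zero_mul]
  · simp

theorem matrixIrred_of_forall_ne_zero {n : ℕ} {A : Matrix (Fin n) (Fin n) ℂ}
    (hA : ∀ i j, A i j ≠ 0) : MatrixIrred A := by
  intro s ⟨i, hi⟩ hs
  obtain ⟨j, hj⟩ := (Set.ne_univ_iff_exists_notMem s).mp hs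
  exact ⟨i, hi, j, hj, hA i j⟩

open scoped Classical in
theorem sum_eq_sum_card_isConj_nsmul {G ι M : Type*} [Group G] [Fintype G] [Fintype ι]
    [AddCommMonoid M] {g : ι → G}
    (hgdist : ∀ i j, IsConj (g i) (g j) → i = j) (hgall : ∀ h : G, ∃ i, IsConj h (g i))
    {f : G → M} (hf : ∀ a b, IsConj a b → f a = f b) :
    ∑ h, f h = ∑ j, #{h | IsConj h (g j)} • f (g j) := by
  have hfiber : ∀ h, ∑ j, (if IsConj h (g j) then f h else 0) = f h := by
    intro h
    obtain ⟨i, hi⟩ := hgall h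
    rw [Fintype.sum_eq_single i fun j hj => if_neg fun hc => hj (hgdist j i (hc.symm.trans hi)),
      if_pos hi]
  calc ∑ h, f h = ∑ j, ∑ h, if IsConj h (g j) then f h else 0 := by
        simp_rw [Finset.sum_comm (γ := ι), hfiber]
    _ = ∑ j, #{h | IsConj h (g j)} • f (g j) := by
        refine Finset.sum_congr rfl fun j _ => ?_
        rw [← Finset.sum_filter,
          Finset.sum_congr rfl fun h hh => hf h (g j) (Finset.mem_filter.mp hh).2, Finset.sum_const]

section CharacterTable

open scoped Classical

variable {G : Type} [Group G] [Fintype G] {n : ℕ} {ρ : Fin n → FDRep ℂ G} {g : Fin n → G}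

variable (ρ g) in
/-- The formula `[Q⁻¹]_{jk} = conj (χ_k (g_j)) / |C_G(g_j)|`, rewritten using
`|G| / |C_G(g_j)| = #(class of g_j)` and `conj (χ_k g) = χ_k g⁻¹`. -/
noncomputable def charTableInv : Matrix (Fin n) (Fin n) ℂ :=
  Matrix.of fun j k => (#{h | IsConj h (g j)} : ℂ) / Fintype.card G * (ρ k).character (g j)⁻¹

theorem charTable_mul_charTableInv (hsimple : ∀ i, Simple (ρ i))
    (hdistinct : ∀ i j, Nonempty (ρ i ≅ ρ j) → i = j)
    (hgdist : ∀ i j, IsConj (g i) (g j) → i = j) (hgall : ∀ h : G, ∃ i, IsConj h (g i)) :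
    charTable ρ g * charTableInv ρ g = 1 := by
  ext i k
  have := hsimple i
  have := hsimple k
  let : Invertible (Nat.card G : ℂ) := invertibleOfNonzero (by simp)
  calc (charTable ρ g * charTableInv ρ g) i k
      = (Nat.card G : ℂ)⁻¹ *
          ∑ j, #{h | IsConj h (g j)} • ((ρ i).character (g j) * (ρ k).character (g j)⁻¹) := by
        simp only [Matrix.mul_apply, charTable, charTableInv, Matrix.of_apply, Finset.mul_sum,
          nsmul_eq_mul, Nat.card_eq_fintype_card]
        exact Finset.sum_congr rfl fun _ _ => by ring
    _ = (Nat.card G : ℂ)⁻¹ * ∑ h, (ρ i).character h * (ρ k).character h⁻¹ := by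
        rw [sum_eq_sum_card_isConj_nsmul hgdist hgall fun a b hab => by
          rw [FDRep.char_eq_of_isConj _ hab, FDRep.char_eq_of_isConj _ hab.inv]]
    _ = (1 : Matrix (Fin n) (Fin n) ℂ) i k := by
        rw [FDRep.char_orthonormal, Matrix.one_apply]
        by_cases hik : i = k
        · subst hik
          simp
        · rw [if_neg hik, if_neg fun hiso => hik (hdistinct i k hiso)]

theorem charTable_inv (hsimple : ∀ i, Simple (ρ i))
    (hdistinct : ∀ i j, Nonempty (ρ i ≅ ρ j) → i = j)
    (hgdist : ∀ i j, IsConj (g i) (g j) → i = j) (hgall : ∀ h : G, ∃ i, IsConj h (g i)) :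
    (charTable ρ g)⁻¹ = charTableInv ρ g :=
  Matrix.inv_eq_right_inv (charTable_mul_charTableInv hsimple hdistinct hgdist hgall)

theorem isUnit_charTable (hsimple : ∀ i, Simple (ρ i))
    (hdistinct : ∀ i j, Nonempty (ρ i ≅ ρ j) → i = j)
    (hgdist : ∀ i j, IsConj (g i) (g j) → i = j) (hgall : ∀ h : G, ∃ i, IsConj h (g i)) :
    IsUnit (charTable ρ g) :=
  (Matrix.isUnit_iff_isUnit_det _).mpr <|
    Matrix.isUnit_det_of_right_inverse (charTable_mul_charTableInv hsimple hdistinct hgdist hgall)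

theorem charTable_mul_diagonal_single_mul_inv_apply (hsimple : ∀ i, Simple (ρ i))
    (hdistinct : ∀ i j, Nonempty (ρ i ≅ ρ j) → i = j)
    (hgdist : ∀ i j, IsConj (g i) (g j) → i = j) (hgall : ∀ h : G, ∃ i, IsConj h (g i))
    {i0 : Fin n} (hg0 : g i0 = 1) (i j : Fin n) :
    (charTable ρ g * Matrix.diagonal (Pi.single i0 (1 : ℂ)) * (charTable ρ g)⁻¹) i j =
      ((Module.finrank ℂ (ρ i) : ℂ) * (Module.finrank ℂ (ρ j) : ℂ)) / (Fintype.card G : ℂ) := by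
  have hclass : #{h : G | IsConj h 1} = 1 := by
    rw [Finset.card_eq_one]
    exact ⟨1, by ext; simp⟩
  rw [charTable_inv hsimple hdistinct hgdist hgall, Matrix.mul_diagonal_single_one_mul_apply]
  simp only [charTable, charTableInv, Matrix.of_apply, hg0, hclass, inv_one, FDRep.char_one]
  ring

end CharacterTable

theorem stmt7_general {G : Type} [Group G] [Fintype G] {n : ℕ}
    (ρ : Fin n → FDRep ℂ G)
    (hsimple : ∀ i, Simple (ρ i))
    (hdistinct : ∀ i j, Nonempty (ρ i ≅ ρ j) → i = j)
    (g : Fin n → G)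
    (hgdist : ∀ i j, IsConj (g i) (g j) → i = j)
    (hgall : ∀ h : G, ∃ i, IsConj h (g i)) (i0 : Fin n) (hg0 : g i0 = 1) :
    (∀ i j, (charTable ρ g * Matrix.diagonal (Pi.single i0 (1 : ℂ)) * (charTable ρ g)⁻¹) i j =
        ((Module.finrank ℂ (ρ i) : ℂ) * (Module.finrank ℂ (ρ j) : ℂ)) / (Fintype.card G : ℂ)) ∧
      (∀ i j, 0 < (charTable ρ g * Matrix.diagonal (Pi.single i0 (1 : ℂ)) * (charTable ρ g)⁻¹) i j) ∧
      (IsUnit (charTable ρ g) ∧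
        ∃ d : Fin n → ℂ,
          (∀ i j, 0 ≤ (charTable ρ g * Matrix.diagonal d * (charTable ρ g)⁻¹) i j) ∧
            MatrixIrred (charTable ρ g * Matrix.diagonal d * (charTable ρ g)⁻¹)) := by
  have hentry := charTable_mul_diagonal_single_mul_inv_apply hsimple hdistinct hgdist hgall hg0
  have hpos : ∀ i j,
      0 < (charTable ρ g * Matrix.diagonal (Pi.single i0 (1 : ℂ)) * (charTable ρ g)⁻¹) i j := by
    intro i j
    have := hsimple i
    have := hsimple j
    have := (ρ i).finrank_pos_of_simple
    have := (ρ j).finrank_pos_of_simple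
    rw [hentry]
    positivity
  exact ⟨hentry, hpos, isUnit_charTable hsimple hdistinct hgdist hgall, Pi.single i0 1,
    fun i j => (hpos i j).le, matrixIrred_of_forall_ne_zero fun i j => (hpos i j).ne'⟩

theorem stmt7 {G : Type} [Group G] [Fintype G] {n : ℕ}
    (ρ : Fin n → FDRep ℂ G)
    (hsimple : ∀ i, Simple (ρ i))
    (hdistinct : ∀ i j, Nonempty (ρ i ≅ ρ j) → i = j)
    (hcomplete : ∀ V : FDRep ℂ G, Simple V → ∃ i, Nonempty (V ≅ ρ i))
    (g : Fin n → G)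
    (hgdist : ∀ i j, IsConj (g i) (g j) → i = j)
    (hgall : ∀ h : G, ∃ i, IsConj h (g i)) (i0 : Fin n) (hg0 : g i0 = 1) :
    (∀ i j, (charTable ρ g * Matrix.diagonal (Pi.single i0 (1 : ℂ)) * (charTable ρ g)⁻¹) i j =
        ((Module.finrank ℂ (ρ i) : ℂ) * (Module.finrank ℂ (ρ j) : ℂ)) / (Fintype.card G : ℂ)) ∧
      (∀ i j, 0 < (charTable ρ g * Matrix.diagonal (Pi.single i0 (1 : ℂ)) * (charTable ρ g)⁻¹) i j) ∧
      (IsUnit (charTable ρ g) ∧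
        ∃ d : Fin n → ℂ,
          (∀ i j, 0 ≤ (charTable ρ g * Matrix.diagonal d * (charTable ρ g)⁻¹) i j) ∧
            MatrixIrred (charTable ρ g * Matrix.diagonal d * (charTable ρ g)⁻¹)) :=
  stmt7_general ρ hsimple hdistinct g hgdist hgall i0 hg0
end

section
/- The character table Q of any finite group G is ideal: the spectracone C(Q) = { x ∈ ℂⁿ : Q D_x Q⁻¹ ≥ 0 entrywise } equals the conical hull of the rows of Q. -/
open scoped ComplexOrder
open CategoryTheory

/-!
For an invertible `S`, `S D_x S⁻¹ = N` says that `S a * x = ∑ b, N a b • S b` for every row `a`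
(Hadamard product of a row with `x`). So `x` lies in the spectracone iff every `S a * x` lies in
the cone of the rows. If the all-ones vector is `∑ c a • S a` with `c ≥ 0`, then
`x = ∑ c a • (S a * x)` lies in the row cone; conversely, if products of rows stay in the row cone,
so does `S a * x` for `x` in it.

For a character table both conditions hold: every character is a combination of the irreducible
ones with the multiplicities `dim Hom(ρ_b, V)` as coefficients, read off from the orthogonality
relations; the all-ones vector is the trivial character and `χ_a χ_b` is the character of
`ρ_a ⊗ ρ_b`.
-/

open Matrix

section Spectracone

variable {ι : Type*} [Fintype ι] {S : Matrix ι ι ℂ}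

lemma sum_smul_row_mem_hull {c : ι → ℂ} (hc : ∀ k, 0 ≤ c k) :
    ∑ k, c k • S k ∈ PointedCone.hull ℝ (Set.range S) := by
  refine Submodule.sum_mem _ fun k _ => ?_
  obtain ⟨hre, him⟩ := Complex.nonneg_iff.mp (hc k)
  rw [show c k = ((c k).re : ℂ) from Complex.ext rfl him.symm, Complex.coe_smul]
  exact Submodule.smul_mem _ (⟨(c k).re, hre⟩ : {r : ℝ // 0 ≤ r})
    (PointedCone.subset_hull (Set.mem_range_self k))

variable [DecidableEq ι]

noncomputable def spectracone (S : Matrix ι ι ℂ) : Set (ι → ℂ) :=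
  {x | ∀ a b, 0 ≤ (S * diagonal x * S⁻¹) a b}

lemma Matrix.mul_diagonal_row (x : ι → ℂ) (a : ι) : (S * diagonal x) a = S a * x :=
  funext fun j => mul_diagonal x S a j

lemma conj_diagonal_eq_iff (hS : IsUnit S.det) (x : ι → ℂ) (N : Matrix ι ι ℂ) :
    S * diagonal x * S⁻¹ = N ↔ ∀ a, S a * x = ∑ b, N a b • S b := by
  have hconj : S * diagonal x * S⁻¹ = N ↔ S * diagonal x = N * S := by
    constructor
    · rintro rfl
      rw [nonsing_inv_mul_cancel_right _ _ hS]
    · intro h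
      rw [h, mul_nonsing_inv_cancel_right _ _ hS]
  refine hconj.trans ⟨fun h a => ?_, fun h => funext fun a => ?_⟩
  · rw [← mul_diagonal_row, h, mul_apply_eq_vecMul, vecMul_eq_sum]
  · rw [mul_diagonal_row, h a, mul_apply_eq_vecMul, vecMul_eq_sum]

end Spectracone

section RowCone

variable {n : ℕ} {S : Matrix (Fin n) (Fin n) ℂ}

lemma coniRows_iff_mem_hull {x : Fin n → ℂ} :
    coniRows S x ↔ x ∈ PointedCone.hull ℝ (Set.range S) := by
  refine Iff.trans ?_ (Submodule.mem_span_range_iff_exists_fun _).symm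
  constructor
  · rintro ⟨α, hα, rfl⟩
    exact ⟨fun k => ⟨α k, hα k⟩, rfl⟩
  · rintro ⟨c, rfl⟩
    exact ⟨fun k => c k, fun k => (c k).2, rfl⟩

lemma mem_spectracone_iff (hS : IsUnit S.det) {x : Fin n → ℂ} :
    x ∈ spectracone S ↔ ∀ a, S a * x ∈ PointedCone.hull ℝ (Set.range S) := by
  constructor
  · intro hx a
    rw [(conj_diagonal_eq_iff hS x _).mp rfl a]
    exact sum_smul_row_mem_hull (hx a)
  · intro hx
    choose α hα hrow using fun a => coniRows_iff_mem_hull.mpr (hx a)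
    have hN : S * diagonal x * S⁻¹ = of fun a b => (α a b : ℂ) := by
      refine (conj_diagonal_eq_iff hS x _).mpr fun a => ?_
      simp only [hrow a, of_apply, Complex.coe_smul]
    intro a b
    rw [hN, of_apply]
    exact Complex.zero_le_real.mpr (hα a b)

theorem spectracone_eq_setOf_coniRows (hS : IsUnit S.det)
    (hone : 1 ∈ PointedCone.hull ℝ (Set.range S))
    (hmul : ∀ a b, S a * S b ∈ PointedCone.hull ℝ (Set.range S)) :
    spectracone S = {x | coniRows S x} := by
  ext x
  rw [Set.mem_ofPred_eq, mem_spectracone_iff hS, coniRows_iff_mem_hull]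
  constructor
  · intro hx
    obtain ⟨c, hc, hc_one⟩ := coniRows_iff_mem_hull.mpr hone
    have hx_eq : x = ∑ k, c k • (S k * x) := calc
      x = 1 * x := (one_mul x).symm
      _ = ∑ k, c k • (S k * x) := by simp only [hc_one, Finset.sum_mul, smul_mul_assoc]
    rw [hx_eq]
    exact Submodule.sum_mem _ fun k _ =>
      Submodule.smul_mem _ (⟨c k, hc k⟩ : {r : ℝ // 0 ≤ r}) (hx k)
  · intro hx a
    obtain ⟨α, hα, rfl⟩ := coniRows_iff_mem_hull.mpr hx
    rw [Finset.mul_sum]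
    simp only [mul_smul_comm]
    exact Submodule.sum_mem _ fun k _ =>
      Submodule.smul_mem _ (⟨α k, hα k⟩ : {r : ℝ // 0 ≤ r}) (hmul a k)

end RowCone

section CharacterTable

variable {G : Type} [Group G]

lemma FDRep.character_trivial {k : Type} [Field k] :
    (FDRep.of (Representation.trivial k G k)).character = 1 := by
  ext h
  simp [FDRep.character]

lemma FDRep.character_eq_of_isConj {k : Type} [Field k] (V : FDRep k G) {a b : G}
    (h : IsConj a b) : V.character a = V.character b := by
  obtain ⟨c, rfl⟩ := isConj_iff.mp h
  exact (FDRep.char_conj V a c).symm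

variable [Fintype G] {n : ℕ} (ρ : Fin n → FDRep ℂ G)

-- `cl h` indexes the conjugacy class of `h`; the first orthogonality relation makes this the
-- inverse of the transposed character table.
noncomputable def dualCharTable (cl : G → Fin n) : Matrix (Fin n) (Fin n) ℂ :=
  of fun m j => (Nat.card G : ℂ)⁻¹ * ∑ h with cl h = j, (ρ m).character h⁻¹

variable {ρ} {g : Fin n → G} {cl : G → Fin n}

lemma dualCharTable_mulVec (hcl : ∀ h, IsConj h (g (cl h))) (V : FDRep ℂ G) (m : Fin n) :
    (dualCharTable ρ cl *ᵥ fun j => V.character (g j)) m = Module.finrank ℂ (ρ m ⟶ V) := by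
  have : Invertible (Nat.card G : ℂ) := invertibleOfNonzero (by simp)
  rw [← FDRep.scalar_product_char_eq_finrank_equivariant, ← Finset.sum_fiberwise _ cl]
  simp only [mulVec, dotProduct, dualCharTable, of_apply, mul_assoc, ← Finset.mul_sum,
    Finset.sum_mul]
  congr 1
  refine Finset.sum_congr rfl fun j _ => Finset.sum_congr rfl fun h hh => ?_
  rw [V.character_eq_of_isConj (hcl h), (Finset.mem_filter.mp hh).2, mul_comm]

variable [∀ i, Simple (ρ i)]

lemma dualCharTable_mul_transpose_charTable (hdistinct : ∀ i j, Nonempty (ρ i ≅ ρ j) → i = j)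
    (hcl : ∀ h, IsConj h (g (cl h))) : dualCharTable ρ cl * (charTable ρ g)ᵀ = 1 := by
  ext m b
  have hiso : Nonempty (ρ m ≅ ρ b) ↔ m = b := ⟨hdistinct m b, by rintro rfl; exact ⟨Iso.refl _⟩⟩
  calc _ = (Module.finrank ℂ (ρ m ⟶ ρ b) : ℂ) := dualCharTable_mulVec hcl (ρ b) m
    _ = _ := by simp [FDRep.finrank_hom_simple_simple, hiso, one_apply]

lemma charTable_det_isUnit (hdistinct : ∀ i j, Nonempty (ρ i ≅ ρ j) → i = j)
    (hgall : ∀ h : G, ∃ i, IsConj h (g i)) : IsUnit (charTable ρ g).det := by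
  choose cl hcl using hgall
  simpa using isUnit_det_of_left_inverse (dualCharTable_mul_transpose_charTable hdistinct hcl)

lemma character_mem_hull_charTable (hdistinct : ∀ i j, Nonempty (ρ i ≅ ρ j) → i = j)
    (hgall : ∀ h : G, ∃ i, IsConj h (g i)) (V : FDRep ℂ G) :
    (fun j => V.character (g j)) ∈ PointedCone.hull ℝ (Set.range (charTable ρ g)) := by
  choose cl hcl using hgall
  have hinv : (charTable ρ g)ᵀ * dualCharTable ρ cl = 1 :=
    mul_eq_one_comm.mp (dualCharTable_mul_transpose_charTable hdistinct hcl)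
  rw [← one_mulVec (fun j => V.character (g j)), ← hinv, ← mulVec_mulVec, mulVec_transpose,
    vecMul_eq_sum]
  refine Submodule.sum_mem _ fun b _ => ?_
  rw [dualCharTable_mulVec hcl, Nat.cast_smul_eq_nsmul]
  exact nsmul_mem (PointedCone.subset_hull (Set.mem_range_self b)) _

end CharacterTable

theorem stmt10_general {G : Type} [Group G] [Fintype G] {n : ℕ}
    (ρ : Fin n → FDRep ℂ G)
    (hsimple : ∀ i, Simple (ρ i))
    (hdistinct : ∀ i j, Nonempty (ρ i ≅ ρ j) → i = j)
    (g : Fin n → G)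
    (hgall : ∀ h : G, ∃ i, IsConj h (g i)) :
    {x : Fin n → ℂ |
        ∀ a b, 0 ≤ (charTable ρ g * Matrix.diagonal x * (charTable ρ g)⁻¹) a b} =
      {x : Fin n → ℂ | coniRows (charTable ρ g) x} := by
  have hchar := character_mem_hull_charTable (ρ := ρ) hdistinct hgall
  refine spectracone_eq_setOf_coniRows (charTable_det_isUnit hdistinct hgall) ?_ fun a b => ?_
  · have h := hchar (FDRep.of (Representation.trivial ℂ G ℂ))
    simp only [FDRep.character_trivial, Pi.one_apply] at h
    exact h
  · have h := hchar (MonoidalCategory.tensorObj (ρ a) (ρ b))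
    simp only [FDRep.char_tensor, Pi.mul_apply] at h
    exact h

theorem stmt10 {G : Type} [Group G] [Fintype G] {n : ℕ}
    (ρ : Fin n → FDRep ℂ G)
    (hsimple : ∀ i, Simple (ρ i))
    (hdistinct : ∀ i j, Nonempty (ρ i ≅ ρ j) → i = j)
    (hcomplete : ∀ V : FDRep ℂ G, Simple V → ∃ i, Nonempty (V ≅ ρ i))
    (g : Fin n → G)
    (hgdist : ∀ i j, IsConj (g i) (g j) → i = j)
    (hgall : ∀ h : G, ∃ i, IsConj h (g i)) :
    {x : Fin n → ℂ |
        ∀ a b, 0 ≤ (charTable ρ g * Matrix.diagonal x * (charTable ρ g)⁻¹) a b} =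
      {x : Fin n → ℂ | coniRows (charTable ρ g) x} :=
  stmt10_general ρ hsimple hdistinct g hgall
end
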